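/- arXiv:2311.05438 — 9 statements merged into one kernel-verified Lean document; each statement's English description precedes it below -/
import Mathlib

section
/- If R1 < R2, then the penalty-difference function pd(x) = g(R1 + x) − g(R2 + x) is monotonically nonincreasing (antitone) on ℝ; that is, for all x ≤ y one has g(R1 + y) − g(R2 + y) ≤ g(R1 + x) − g(R2 + x). -/
/-- Ranged-counter penalty function:
`g x = p_l * max (d_min - x) 0 + p_u * max (x - d_max) 0`. -/
def rcPenalty (dmin dmax pl pu : ℝ) (x : ℝ) : ℝ :=
  pl * max (dmin - x) 0 + pu * max (x - dmax) 0

lemma phi_mono {c a b : ℝ} (hc : 0 ≤ c) (hab : a ≤ b) :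
    max (a + c) 0 - max a 0 ≤ max (b + c) 0 - max b 0 := by
  simp only [max_def]
  split_ifs <;> linarith

/-- Claim 1: if `R1 < R2`, the penalty-difference function
`pd x = g (R1 + x) - g (R2 + x)` is antitone (nonincreasing) on ℝ. -/
theorem stmt_0 (dmin dmax pl pu R1 R2 : ℝ)
    (hd : dmin ≤ dmax) (hpl : 0 ≤ pl) (hpu : 0 ≤ pu) (hR : R1 < R2) :
    Antitone (fun x : ℝ =>
      rcPenalty dmin dmax pl pu (R1 + x) - rcPenalty dmin dmax pl pu (R2 + x)) := by
  intro x y hxy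
  simp only [rcPenalty]
  have h1 := phi_mono (c := R2 - R1) (a := dmin - R2 - y) (b := dmin - R2 - x)
    (by linarith) (by linarith)
  have h2 := phi_mono (c := R2 - R1) (a := R1 + x - dmax) (b := R1 + y - dmax)
    (by linarith) (by linarith)
  have e1 : dmin - R2 - y + (R2 - R1) = dmin - (R1 + y) := by ring
  have e2 : dmin - R2 - x + (R2 - R1) = dmin - (R1 + x) := by ring
  have e3 : R1 + x - dmax + (R2 - R1) = R2 + x - dmax := by ring
  have e4 : R1 + y - dmax + (R2 - R1) = R2 + y - dmax := by ring
  have e5 : dmin - R2 - y = dmin - (R2 + y) := by ring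
  have e6 : dmin - R2 - x = dmin - (R2 + x) := by ring
  rw [e1, e2] at h1
  rw [e3, e4] at h2
  rw [e5, e6] at h1
  have m1 := mul_le_mul_of_nonneg_left h1 hpl
  have m2 := mul_le_mul_of_nonneg_left h2 hpu
  linarith
end

section
/- If R1 > R2, then the penalty-difference function pd(x) = g(R1 + x) − g(R2 + x) is monotonically nondecreasing on ℝ; that is, for all x ≤ y one has g(R1 + x) − g(R2 + x) ≤ g(R1 + y) − g(R2 + y). -/
lemma aux_lower {c1 c2 x y : ℝ} (h : c1 ≤ c2) (hxy : x ≤ y) :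
    max (c1 - x) 0 - max (c2 - x) 0 ≤ max (c1 - y) 0 - max (c2 - y) 0 := by
  rcases le_total (c1 - x) 0 with h1 | h1 <;> rcases le_total (c2 - x) 0 with h2 | h2 <;>
    rcases le_total (c1 - y) 0 with h3 | h3 <;> rcases le_total (c2 - y) 0 with h4 | h4 <;>
    simp [max_eq_left, max_eq_right, h1, h2, h3, h4] <;> linarith

lemma aux_upper {c1 c2 x y : ℝ} (h : c2 ≤ c1) (hxy : x ≤ y) :
    max (c1 + x) 0 - max (c2 + x) 0 ≤ max (c1 + y) 0 - max (c2 + y) 0 := by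
  rcases le_total (c1 + x) 0 with h1 | h1 <;> rcases le_total (c2 + x) 0 with h2 | h2 <;>
    rcases le_total (c1 + y) 0 with h3 | h3 <;> rcases le_total (c2 + y) 0 with h4 | h4 <;>
    simp [max_eq_left, max_eq_right, h1, h2, h3, h4] <;> linarith

/-- If `R1 > R2`, the penalty-difference function
`pd x = g (R1 + x) - g (R2 + x)` is monotone (nondecreasing) on ℝ. -/
theorem stmt_1 (dmin dmax pl pu R1 R2 : ℝ)
    (hd : dmin ≤ dmax) (hpl : 0 ≤ pl) (hpu : 0 ≤ pu) (hR : R1 > R2) :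
    Monotone (fun x : ℝ =>
      rcPenalty dmin dmax pl pu (R1 + x) - rcPenalty dmin dmax pl pu (R2 + x)) := by
  intro x y hxy
  simp only [rcPenalty]
  have h1 : max (dmin - (R1 + x)) 0 - max (dmin - (R2 + x)) 0 ≤
      max (dmin - (R1 + y)) 0 - max (dmin - (R2 + y)) 0 := by
    have := aux_lower (c1 := dmin - R1) (c2 := dmin - R2) (by linarith) hxy
    have e : ∀ a b : ℝ, dmin - (a + b) = dmin - a - b := by intro a b; ring
    rw [e, e, e, e]; exact this
  have h2 : max (R1 + x - dmax) 0 - max (R2 + x - dmax) 0 ≤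
      max (R1 + y - dmax) 0 - max (R2 + y - dmax) 0 := by
    have := aux_upper (c1 := R1 - dmax) (c2 := R2 - dmax) (by linarith) hxy
    have e : ∀ a b : ℝ, a - dmax + b = a + b - dmax := by intro a b; ring
    simpa [e] using this
  nlinarith [mul_le_mul_of_nonneg_left h1 hpl, mul_le_mul_of_nonneg_left h2 hpu]
end

section
/- Suppose R1 ≤ R2 and let M ≥ 0. Then for every x with 0 ≤ x ≤ M, the penalty difference pd(x) = g(R1 + x) − g(R2 + x) satisfies pd(M) ≤ pd(x) ≤ pd(0); i.e., pd attains its maximum over [0, M] at x = 0 and its minimum at x = M. -/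
lemma maxdiff_anti (p q s t : ℝ) (hpq : p ≤ q) (hst : s ≤ t) :
    max (t + p) 0 - max (t + q) 0 ≤ max (s + p) 0 - max (s + q) 0 := by
  rcases max_cases (t + p) 0 with ⟨h1, h1'⟩ | ⟨h1, h1'⟩ <;>
  rcases max_cases (t + q) 0 with ⟨h2, h2'⟩ | ⟨h2, h2'⟩ <;>
  rcases max_cases (s + p) 0 with ⟨h3, h3'⟩ | ⟨h3, h3'⟩ <;>
  rcases max_cases (s + q) 0 with ⟨h4, h4'⟩ | ⟨h4, h4'⟩ <;>
  linarith

lemma pd_anti (dmin dmax pl pu R1 R2 : ℝ)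
    (hpl : 0 ≤ pl) (hpu : 0 ≤ pu) (hR : R1 ≤ R2) :
    ∀ x y : ℝ, x ≤ y →
      rcPenalty dmin dmax pl pu (R1 + y) - rcPenalty dmin dmax pl pu (R2 + y) ≤
      rcPenalty dmin dmax pl pu (R1 + x) - rcPenalty dmin dmax pl pu (R2 + x) := by
  intro x y hxy
  unfold rcPenalty
  have h1 : max (-y + (dmin - R1)) 0 - max (-y + (dmin - R2)) 0 ≤
      max (-x + (dmin - R1)) 0 - max (-x + (dmin - R2)) 0 := by
    have := maxdiff_anti (dmin - R2) (dmin - R1) (-y) (-x) (by linarith) (by linarith)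
    linarith
  have h2 : max (y + (R1 - dmax)) 0 - max (y + (R2 - dmax)) 0 ≤
      max (x + (R1 - dmax)) 0 - max (x + (R2 - dmax)) 0 :=
    maxdiff_anti (R1 - dmax) (R2 - dmax) x y (by linarith) hxy
  have e1 : ∀ a : ℝ, dmin - (a + y) = -y + (dmin - a) := by intro a; ring
  have e2 : ∀ a : ℝ, dmin - (a + x) = -x + (dmin - a) := by intro a; ring
  have e3 : ∀ a : ℝ, a + y - dmax = y + (a - dmax) := by intro a; ring
  have e4 : ∀ a : ℝ, a + x - dmax = x + (a - dmax) := by intro a; ring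
  rw [e1, e1, e2, e2, e3, e3, e4, e4]
  nlinarith [mul_le_mul_of_nonneg_left h1 hpl, mul_le_mul_of_nonneg_left h2 hpu]

/-- If `R1 ≤ R2` and `0 ≤ M`, then for every `x ∈ [0, M]`,
`pd M ≤ pd x ≤ pd 0` where `pd x = g (R1 + x) - g (R2 + x)`. -/
theorem stmt_3 (dmin dmax pl pu R1 R2 M : ℝ)
    (hd : dmin ≤ dmax) (hpl : 0 ≤ pl) (hpu : 0 ≤ pu)
    (hR : R1 ≤ R2) (hM : 0 ≤ M) :
    ∀ x : ℝ, 0 ≤ x → x ≤ M →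
      (rcPenalty dmin dmax pl pu (R1 + M) - rcPenalty dmin dmax pl pu (R2 + M) ≤
        rcPenalty dmin dmax pl pu (R1 + x) - rcPenalty dmin dmax pl pu (R2 + x)) ∧
      (rcPenalty dmin dmax pl pu (R1 + x) - rcPenalty dmin dmax pl pu (R2 + x) ≤
        rcPenalty dmin dmax pl pu (R1 + 0) - rcPenalty dmin dmax pl pu (R2 + 0)) := by
  intro x hx0 hxM
  exact ⟨pd_anti dmin dmax pl pu R1 R2 hpl hpu hR x M hxM,
         pd_anti dmin dmax pl pu R1 R2 hpl hpu hR 0 x hx0⟩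
end

section
/- Suppose R1 ≥ R2 and let M ≥ 0. Then for every x with 0 ≤ x ≤ M, the penalty difference pd(x) = g(R1 + x) − g(R2 + x) satisfies pd(0) ≤ pd(x) ≤ pd(M); i.e., pd attains its minimum over [0, M] at x = 0 and its maximum at x = M. -/
lemma key (a b s : ℝ) (hab : b ≤ a) (hs : 0 ≤ s) :
    max a 0 + max (b + s) 0 ≤ max (a + s) 0 + max b 0 := by
  rcases le_total a 0 with h1 | h1 <;> rcases le_total b 0 with h2 | h2 <;>
    rcases le_total (a + s) 0 with h3 | h3 <;> rcases le_total (b + s) 0 with h4 | h4 <;>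
    simp [max_def] <;> split_ifs <;> linarith

lemma pd_mono (dmin dmax pl pu R1 R2 : ℝ)
    (hpl : 0 ≤ pl) (hpu : 0 ≤ pu) (hR : R1 ≥ R2) {y z : ℝ} (hyz : y ≤ z) :
    rcPenalty dmin dmax pl pu (R1 + y) - rcPenalty dmin dmax pl pu (R2 + y) ≤
      rcPenalty dmin dmax pl pu (R1 + z) - rcPenalty dmin dmax pl pu (R2 + z) := by
  unfold rcPenalty
  have h1 := key (dmin - R2 - z) (dmin - R1 - z) (z - y) (by linarith) (by linarith)
  have h2 := key (R1 + y - dmax) (R2 + y - dmax) (z - y) (by linarith) (by linarith)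
  have e1 : dmin - R2 - z + (z - y) = dmin - R2 - y := by ring
  have e2 : dmin - R1 - z + (z - y) = dmin - R1 - y := by ring
  have e3 : R1 + y - dmax + (z - y) = R1 + z - dmax := by ring
  have e4 : R2 + y - dmax + (z - y) = R2 + z - dmax := by ring
  rw [e1, e2] at h1; rw [e3, e4] at h2
  have g1 : dmin - (R1 + y) = dmin - R1 - y := by ring
  have g2 : dmin - (R2 + y) = dmin - R2 - y := by ring
  have g3 : dmin - (R1 + z) = dmin - R1 - z := by ring
  have g4 : dmin - (R2 + z) = dmin - R2 - z := by ring
  rw [g1, g2, g3, g4]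
  nlinarith [mul_le_mul_of_nonneg_left h1 hpl, mul_le_mul_of_nonneg_left h2 hpu]

/-- If `R1 ≥ R2` and `0 ≤ M`, then for every `x ∈ [0, M]`,
`pd 0 ≤ pd x ≤ pd M` where `pd x = g (R1 + x) - g (R2 + x)`. -/
theorem stmt_4 (dmin dmax pl pu R1 R2 M : ℝ)
    (hd : dmin ≤ dmax) (hpl : 0 ≤ pl) (hpu : 0 ≤ pu)
    (hR : R1 ≥ R2) (hM : 0 ≤ M) :
    ∀ x : ℝ, 0 ≤ x → x ≤ M →
      (rcPenalty dmin dmax pl pu (R1 + 0) - rcPenalty dmin dmax pl pu (R2 + 0) ≤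
        rcPenalty dmin dmax pl pu (R1 + x) - rcPenalty dmin dmax pl pu (R2 + x)) ∧
      (rcPenalty dmin dmax pl pu (R1 + x) - rcPenalty dmin dmax pl pu (R2 + x) ≤
        rcPenalty dmin dmax pl pu (R1 + M) - rcPenalty dmin dmax pl pu (R2 + M)) := by
  intro x hx hxM
  exact ⟨pd_mono dmin dmax pl pu R1 R2 hpl hpu hR hx,
         pd_mono dmin dmax pl pu R1 R2 hpl hpu hR hxM⟩
end

section
/- For any R1, R2 ∈ ℝ, any M ≥ 0, and any x with 0 ≤ x ≤ M, the penalty difference pd(x) = g(R1 + x) − g(R2 + x) satisfies min(pd(0), pd(M)) ≤ pd(x) ≤ max(pd(0), pd(M)); that is, the extreme values of pd over the feasible extension range [0, M] are always attained at the endpoints of the interval. -/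
lemma rc_slope (dmin dmax pl pu : ℝ) (hpl : 0 ≤ pl) (hpu : 0 ≤ pu)
    {y1 y2 h : ℝ} (hy : y1 ≤ y2) (hh : 0 ≤ h) :
    rcPenalty dmin dmax pl pu (y1 + h) - rcPenalty dmin dmax pl pu y1 ≤
      rcPenalty dmin dmax pl pu (y2 + h) - rcPenalty dmin dmax pl pu y2 := by
  have hA : max (dmin - (y1 + h)) 0 + max (dmin - y2) 0 ≤
      max (dmin - y1) 0 + max (dmin - (y2 + h)) 0 := by
    simp only [max_def]; split_ifs <;> linarith
  have hB : max (y1 + h - dmax) 0 + max (y2 - dmax) 0 ≤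
      max (y1 - dmax) 0 + max (y2 + h - dmax) 0 := by
    simp only [max_def]; split_ifs <;> linarith
  have := mul_le_mul_of_nonneg_left hA hpl
  have := mul_le_mul_of_nonneg_left hB hpu
  simp only [rcPenalty]
  nlinarith

/-- If `R1 ≤ R2`, the difference `pd t = g (R1+t) - g (R2+t)` is antitone. -/
lemma rc_pd_anti (dmin dmax pl pu R1 R2 : ℝ) (hpl : 0 ≤ pl) (hpu : 0 ≤ pu)
    (hR : R1 ≤ R2) {a b : ℝ} (hab : a ≤ b) :
    rcPenalty dmin dmax pl pu (R1 + b) - rcPenalty dmin dmax pl pu (R2 + b) ≤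
      rcPenalty dmin dmax pl pu (R1 + a) - rcPenalty dmin dmax pl pu (R2 + a) := by
  have h := rc_slope dmin dmax pl pu hpl hpu (y1 := R1 + a) (y2 := R1 + b)
    (h := R2 - R1) (by linarith) (by linarith)
  have e1 : R1 + a + (R2 - R1) = R2 + a := by ring
  have e2 : R1 + b + (R2 - R1) = R2 + b := by ring
  rw [e1, e2] at h
  linarith

/-- For any `R1, R2`, any `M ≥ 0`, and any `x ∈ [0, M]`, the penalty difference
`pd x = g (R1 + x) - g (R2 + x)` lies between `min (pd 0) (pd M)` and
`max (pd 0) (pd M)`: the extrema of `pd` on `[0, M]` are attained at the endpoints. -/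
theorem stmt_5 (dmin dmax pl pu R1 R2 M : ℝ)
    (hd : dmin ≤ dmax) (hpl : 0 ≤ pl) (hpu : 0 ≤ pu) (hM : 0 ≤ M) :
    ∀ x : ℝ, 0 ≤ x → x ≤ M →
      (min (rcPenalty dmin dmax pl pu (R1 + 0) - rcPenalty dmin dmax pl pu (R2 + 0))
           (rcPenalty dmin dmax pl pu (R1 + M) - rcPenalty dmin dmax pl pu (R2 + M)) ≤
        rcPenalty dmin dmax pl pu (R1 + x) - rcPenalty dmin dmax pl pu (R2 + x)) ∧
      (rcPenalty dmin dmax pl pu (R1 + x) - rcPenalty dmin dmax pl pu (R2 + x) ≤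
        max (rcPenalty dmin dmax pl pu (R1 + 0) - rcPenalty dmin dmax pl pu (R2 + 0))
            (rcPenalty dmin dmax pl pu (R1 + M) - rcPenalty dmin dmax pl pu (R2 + M))) := by
  intro x hx hxM
  rcases le_total R1 R2 with hR | hR
  · have h1 := rc_pd_anti dmin dmax pl pu R1 R2 hpl hpu hR hxM
    have h2 := rc_pd_anti dmin dmax pl pu R1 R2 hpl hpu hR hx
    exact ⟨le_trans (min_le_right _ _) h1, le_trans h2 (le_max_left _ _)⟩
  · have h1 := rc_pd_anti dmin dmax pl pu R2 R1 hpl hpu hR hxM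
    have h2 := rc_pd_anti dmin dmax pl pu R2 R1 hpl hpu hR hx
    constructor
    · refine le_trans (min_le_left _ _) ?_; linarith
    · refine le_trans ?_ (le_max_right _ _); linarith
end

section
/- If R1 ≤ R2, then for every real x the penalty difference satisfies p_u · (R1 − R2) ≤ g(R1 + x) − g(R2 + x) ≤ p_l · (R2 − R1); in particular, the penalty-difference function pd is a bounded function on ℝ. -/
/-- If `R1 ≤ R2`, then for every real `x`,
`p_u * (R1 - R2) ≤ g (R1 + x) - g (R2 + x) ≤ p_l * (R2 - R1)`;
in particular the penalty-difference function is bounded on ℝ. -/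
theorem stmt_6 (dmin dmax pl pu R1 R2 : ℝ)
    (hd : dmin ≤ dmax) (hpl : 0 ≤ pl) (hpu : 0 ≤ pu) (hR : R1 ≤ R2) :
    ∀ x : ℝ,
      pu * (R1 - R2) ≤
        rcPenalty dmin dmax pl pu (R1 + x) - rcPenalty dmin dmax pl pu (R2 + x) ∧
      rcPenalty dmin dmax pl pu (R1 + x) - rcPenalty dmin dmax pl pu (R2 + x) ≤
        pl * (R2 - R1) := by
  intro x
  unfold rcPenalty
  rcases le_total (dmin - (R1 + x)) 0 with h1 | h1 <;>
    rcases le_total (dmin - (R2 + x)) 0 with h2 | h2 <;>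
    rcases le_total ((R1 + x) - dmax) 0 with h3 | h3 <;>
    rcases le_total ((R2 + x) - dmax) 0 with h4 | h4 <;>
    simp_all [max_eq_left, max_eq_right, le_max_iff, max_le_iff] <;>
    constructor <;> nlinarith
end

section
/- (Forward dominance rule.) Let C1, C2 ∈ ℝ be the accumulated costs and R1 ≤ R2 the resource consumptions of two partial paths ending at the same node. If C1 + g(R1) < C2 + g(R2), then for every extension consumption x ≥ 0 one has C1 + g(R1 + x) < C2 + g(R2 + x); that is, the completed path extending the first partial path always has strictly smaller total cost than the completed path extending the second one by the same extension. -/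
lemma hinge1 (a b x : ℝ) (hab : a ≤ b) (hx : 0 ≤ x) :
    max (b - x) 0 - max (a - x) 0 ≤ max b 0 - max a 0 := by
  rcases le_total (b - x) 0 <;> rcases le_total (a - x) 0 <;>
    rcases le_total b 0 <;> rcases le_total a 0 <;>
    simp_all [max_eq_left, max_eq_right, max_eq_left_of_lt] <;> linarith

lemma hinge2 (a b x : ℝ) (hab : a ≤ b) (hx : 0 ≤ x) :
    max (a + x) 0 - max (b + x) 0 ≤ max a 0 - max b 0 := by
  rcases le_total (b + x) 0 <;> rcases le_total (a + x) 0 <;>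
    rcases le_total b 0 <;> rcases le_total a 0 <;>
    simp_all [max_eq_left, max_eq_right] <;> linarith

/-- Forward dominance rule: with accumulated costs `C1, C2` and resource
consumptions `R1 ≤ R2`, if `C1 + g R1 < C2 + g R2`, then for every extension
consumption `x ≥ 0`, `C1 + g (R1 + x) < C2 + g (R2 + x)`. -/
theorem stmt_7 (dmin dmax pl pu C1 C2 R1 R2 : ℝ)
    (hd : dmin ≤ dmax) (hpl : 0 ≤ pl) (hpu : 0 ≤ pu) (hR : R1 ≤ R2)
    (hdom : C1 + rcPenalty dmin dmax pl pu R1 < C2 + rcPenalty dmin dmax pl pu R2) :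
    ∀ x : ℝ, 0 ≤ x →
      C1 + rcPenalty dmin dmax pl pu (R1 + x) <
        C2 + rcPenalty dmin dmax pl pu (R2 + x) := by
  intro x hx
  unfold rcPenalty at *
  have h1 : max (dmin - R1 - x) 0 - max (dmin - R2 - x) 0 ≤
      max (dmin - R1) 0 - max (dmin - R2) 0 :=
    hinge1 (dmin - R2) (dmin - R1) x (by linarith) hx
  have h2 : max (R1 - dmax + x) 0 - max (R2 - dmax + x) 0 ≤
      max (R1 - dmax) 0 - max (R2 - dmax) 0 :=
    hinge2 (R1 - dmax) (R2 - dmax) x (by linarith) hx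
  have e1 : dmin - (R1 + x) = dmin - R1 - x := by ring
  have e2 : dmin - (R2 + x) = dmin - R2 - x := by ring
  have e3 : R1 + x - dmax = R1 - dmax + x := by ring
  have e4 : R2 + x - dmax = R2 - dmax + x := by ring
  rw [e1, e2, e3, e4]
  nlinarith [mul_le_mul_of_nonneg_left h1 hpl, mul_le_mul_of_nonneg_left h2 hpu]
end

section
/- (Reverse dominance rule.) Let C1, C2 ∈ ℝ be the accumulated costs and R1 ≤ R2 the resource consumptions of two partial paths ending at the same node, and let M ≥ 0 be the maximum possible resource consumption of any extension. If C1 + g(R1 + M) > C2 + g(R2 + M), then for every extension consumption x with 0 ≤ x ≤ M one has C1 + g(R1 + x) > C2 + g(R2 + x); in particular, the second partial path dominates the first even when C2 > C1. -/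
lemma aux_conv (u v s : ℝ) (h : u ≤ v) (hs : 0 ≤ s) :
    max v 0 + max (u + s) 0 ≤ max u 0 + max (v + s) 0 := by
  rcases le_total u 0 with h1 | h1 <;> rcases le_total v 0 with h2 | h2 <;>
    rcases le_total (u + s) 0 with h3 | h3 <;> rcases le_total (v + s) 0 with h4 | h4 <;>
    simp [max_eq_left, max_eq_right, h1, h2, h3, h4] <;> linarith

/-- Reverse dominance rule: with accumulated costs `C1, C2`, resource
consumptions `R1 ≤ R2`, and maximum extension consumption `M ≥ 0`, if
`C1 + g (R1 + M) > C2 + g (R2 + M)`, then for every extension consumption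
`x ∈ [0, M]`, `C1 + g (R1 + x) > C2 + g (R2 + x)`. -/
theorem stmt_8 (dmin dmax pl pu C1 C2 R1 R2 M : ℝ)
    (hd : dmin ≤ dmax) (hpl : 0 ≤ pl) (hpu : 0 ≤ pu) (hR : R1 ≤ R2) (hM : 0 ≤ M)
    (hdom : C1 + rcPenalty dmin dmax pl pu (R1 + M) >
      C2 + rcPenalty dmin dmax pl pu (R2 + M)) :
    ∀ x : ℝ, 0 ≤ x → x ≤ M →
      C1 + rcPenalty dmin dmax pl pu (R1 + x) >
        C2 + rcPenalty dmin dmax pl pu (R2 + x) := by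
  intro x hx hxM
  unfold rcPenalty at hdom ⊢
  have h1 := aux_conv (dmin - R2 - M) (dmin - R1 - M) (M - x) (by linarith) (by linarith)
  have h2 := aux_conv (R1 + x - dmax) (R2 + x - dmax) (M - x) (by linarith) (by linarith)
  have e1 : dmin - R2 - M + (M - x) = dmin - (R2 + x) := by ring
  have e2 : dmin - R1 - M + (M - x) = dmin - (R1 + x) := by ring
  have e3 : R1 + x - dmax + (M - x) = R1 + M - dmax := by ring
  have e4 : R2 + x - dmax + (M - x) = R2 + M - dmax := by ring
  rw [e1, e2] at h1
  rw [e3, e4] at h2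
  have e5 : dmin - R1 - M = dmin - (R1 + M) := by ring
  have e6 : dmin - R2 - M = dmin - (R2 + M) := by ring
  rw [e5, e6] at h1
  have H1 := mul_le_mul_of_nonneg_left h1 hpl
  have H2 := mul_le_mul_of_nonneg_left h2 hpu
  nlinarith [H1, H2]
end

section
/- (Multi-resource dominance rule.) Let I be a finite index set of resources, and for each r ∈ I let g_r be a ranged-counter penalty function with parameters d_min,r ≤ d_max,r and nonnegative weights p_l,r, p_u,r, let R1_r, R2_r ∈ ℝ be the resource-r consumptions of two partial paths ending at the same node, and let M_r ≥ 0 be the maximum possible resource-r consumption of any extension. Let C1, C2 ∈ ℝ be the accumulated costs of the two partial paths. If C1 − C2 + Σ_{r ∈ I} max(g_r(R1_r) − g_r(R2_r), g_r(R1_r + M_r) − g_r(R2_r + M_r)) < 0, then for every choice of extension consumptions (x_r)_{r ∈ I} with 0 ≤ x_r ≤ M_r for all r, one has C1 + Σ_{r ∈ I} g_r(R1_r + x_r) < C2 + Σ_{r ∈ I} g_r(R2_r + x_r). -/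
lemma hinge_four (p q r s : ℝ) (h1 : r ≤ p) (h2 : p ≤ s) (h3 : r ≤ q)
    (hsum : p + q = r + s) : max p 0 + max q 0 ≤ max r 0 + max s 0 := by
  simp only [max_def]
  split_ifs <;> linarith

lemma rc_four (dmin dmax pl pu : ℝ) (hpl : 0 ≤ pl) (hpu : 0 ≤ pu)
    (p q r s : ℝ) (h1 : r ≤ p) (h2 : p ≤ s) (h3 : r ≤ q) (hsum : p + q = r + s) :
    rcPenalty dmin dmax pl pu p + rcPenalty dmin dmax pl pu q ≤
      rcPenalty dmin dmax pl pu r + rcPenalty dmin dmax pl pu s := by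
  have hA : max (dmin - p) 0 + max (dmin - q) 0 ≤
      max (dmin - s) 0 + max (dmin - r) 0 :=
    hinge_four _ _ _ _ (by linarith) (by linarith) (by linarith) (by linarith)
  have hB : max (p - dmax) 0 + max (q - dmax) 0 ≤
      max (r - dmax) 0 + max (s - dmax) 0 :=
    hinge_four _ _ _ _ (by linarith) (by linarith) (by linarith) (by linarith)
  have := mul_le_mul_of_nonneg_left hA hpl
  have := mul_le_mul_of_nonneg_left hB hpu
  simp only [rcPenalty]
  nlinarith

/-- Multi-resource dominance rule: with a finite index set `ι` of resources,
per-resource parameters `dmin r ≤ dmax r`, nonnegative weights, consumptions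
`R1 r, R2 r`, maximum extension consumptions `M r ≥ 0`, and accumulated costs
`C1, C2`, if
`C1 - C2 + ∑ r, max (g_r (R1 r) - g_r (R2 r)) (g_r (R1 r + M r) - g_r (R2 r + M r)) < 0`,
then for all feasible extension consumptions `x r ∈ [0, M r]`,
`C1 + ∑ r, g_r (R1 r + x r) < C2 + ∑ r, g_r (R2 r + x r)`. -/
theorem stmt_9 {ι : Type*} [Fintype ι]
    (dmin dmax pl pu R1 R2 M : ι → ℝ) (C1 C2 : ℝ)
    (hd : ∀ r, dmin r ≤ dmax r) (hpl : ∀ r, 0 ≤ pl r) (hpu : ∀ r, 0 ≤ pu r)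
    (hM : ∀ r, 0 ≤ M r)
    (hdom : C1 - C2 + ∑ r : ι,
      max (rcPenalty (dmin r) (dmax r) (pl r) (pu r) (R1 r) -
            rcPenalty (dmin r) (dmax r) (pl r) (pu r) (R2 r))
          (rcPenalty (dmin r) (dmax r) (pl r) (pu r) (R1 r + M r) -
            rcPenalty (dmin r) (dmax r) (pl r) (pu r) (R2 r + M r)) < 0) :
    ∀ x : ι → ℝ, (∀ r, 0 ≤ x r ∧ x r ≤ M r) →
      C1 + ∑ r : ι, rcPenalty (dmin r) (dmax r) (pl r) (pu r) (R1 r + x r) <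
        C2 + ∑ r : ι, rcPenalty (dmin r) (dmax r) (pl r) (pu r) (R2 r + x r) := by
  intro x hx
  set g := fun r => rcPenalty (dmin r) (dmax r) (pl r) (pu r) with hg
  have key : ∀ r : ι, g r (R1 r + x r) - g r (R2 r + x r) ≤
      max (g r (R1 r) - g r (R2 r)) (g r (R1 r + M r) - g r (R2 r + M r)) := by
    intro r
    obtain ⟨hx0, hxM⟩ := hx r
    rcases le_total (R1 r) (R2 r) with h | h
    · have := rc_four (dmin r) (dmax r) (pl r) (pu r) (hpl r) (hpu r)
        (R1 r + x r) (R2 r) (R1 r) (R2 r + x r)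
        (by linarith) (by linarith) (by linarith) (by ring)
      exact le_max_of_le_left (by simpa [hg] using by linarith)
    · have := rc_four (dmin r) (dmax r) (pl r) (pu r) (hpl r) (hpu r)
        (R1 r + x r) (R2 r + M r) (R2 r + x r) (R1 r + M r)
        (by linarith) (by linarith) (by linarith) (by ring)
      exact le_max_of_le_right (by simpa [hg] using by linarith)
  have hsum := Finset.sum_le_sum (fun r _ => key r) (s := Finset.univ)
  have h1 : (∑ r : ι, g r (R1 r + x r)) - (∑ r : ι, g r (R2 r + x r)) =
      ∑ r : ι, (g r (R1 r + x r) - g r (R2 r + x r)) := by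
    rw [Finset.sum_sub_distrib]
  simp only [hg] at *
  linarith [hsum, h1]
end
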